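/- Let Ω ⊂ ℝⁿ be a bounded connected open set whose signed distance function d is C² on a neighborhood of ∂Ω. Assume condition (reg2) (β-Hölder continuity of σ with β ∈ (1/2,1]) and the variant of condition (irrelevant) with exponent γ = 1: there exist δ₁, k > 0 such that for every x̄ ∈ ∂Ω there is ᾱ ∈ A with σ(x̄,ᾱ)ᵀ Dd(x̄) = 0 and b(x,ᾱ)·Dd(x) + tr(a(x,ᾱ)D²d(x)) ≥ k d(x) for all x ∈ Ω ∩ B_{δ₁}(x̄). Then for every η > 0 there exists δ > 0 such that for all x ∈ Ω_δ one has F[−log(d+η)](x) > 0, i.e. sup_{α∈A} ( b(x,α)·Dd(x)/(d(x)+η) + tr(a(x,α)D²d(x))/(d(x)+η) − |σ(x,α)ᵀ Dd(x)|²/(d(x)+η)² ) > 0. -/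

import Mathlib

open scoped InnerProductSpace Matrix
open Filter

noncomputable section

/-- The signed distance to the boundary of `Ω`:
`d(x) = dist(x, Ωᶜ) - dist(x, closure Ω)`. -/
def sdist {n : ℕ} (Ω : Set (EuclideanSpace ℝ (Fin n))) (x : EuclideanSpace ℝ (Fin n)) : ℝ :=
  Metric.infDist x Ωᶜ - Metric.infDist x (closure Ω)

/-- The distance to the topological boundary of `Ω`. -/
def bdist {n : ℕ} (Ω : Set (EuclideanSpace ℝ (Fin n))) (x : EuclideanSpace ℝ (Fin n)) : ℝ :=
  Metric.infDist x (frontier Ω)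

/-- The Frobenius (Euclidean) norm of a matrix. -/
def mnorm {n r : ℕ} (M : Matrix (Fin n) (Fin r) ℝ) : ℝ :=
  Real.sqrt (∑ i, ∑ j, M i j ^ 2)

/-- The quadratic form `v ↦ v ⬝ X v`. -/
def quadForm {n : ℕ} (X : Matrix (Fin n) (Fin n) ℝ) (v : EuclideanSpace ℝ (Fin n)) : ℝ :=
  ∑ i, ∑ j, X i j * v i * v j

/-- `Mᵀ v` as a vector in `ℝʳ` (used for `σ(x,α)ᵀ Dd(x)`). -/
def sigmaT {n r : ℕ} (M : Matrix (Fin n) (Fin r) ℝ) (v : EuclideanSpace ℝ (Fin n)) :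
    Fin r → ℝ :=
  Matrix.mulVec Mᵀ (fun i => v i)

/-- The second-order superjet of `u` at `x` relative to `S`. -/
def J2plus {n : ℕ} (S : Set (EuclideanSpace ℝ (Fin n))) (u : EuclideanSpace ℝ (Fin n) → ℝ)
    (x : EuclideanSpace ℝ (Fin n)) :
    Set (EuclideanSpace ℝ (Fin n) × Matrix (Fin n) (Fin n) ℝ) :=
  { pX | pX.2.IsSymm ∧ ∀ ε > (0 : ℝ), ∀ᶠ y in nhdsWithin x S,
      u y - u x - ⟪pX.1, y - x⟫_ℝ - (1 / 2) * quadForm pX.2 (y - x) ≤ ε * ‖y - x‖ ^ 2 }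

/-- The second-order subjet of `u` at `x` relative to `S`: `J^{2,-}u = -J^{2,+}(-u)`. -/
def J2minus {n : ℕ} (S : Set (EuclideanSpace ℝ (Fin n))) (u : EuclideanSpace ℝ (Fin n) → ℝ)
    (x : EuclideanSpace ℝ (Fin n)) :
    Set (EuclideanSpace ℝ (Fin n) × Matrix (Fin n) (Fin n) ℝ) :=
  { qZ | (-qZ.1, -qZ.2) ∈ J2plus S (fun y => -u y) x }

/-- The first-order superdifferential of `u` at `x` relative to `S`. -/
def D1plus {n : ℕ} (S : Set (EuclideanSpace ℝ (Fin n))) (u : EuclideanSpace ℝ (Fin n) → ℝ)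
    (x : EuclideanSpace ℝ (Fin n)) : Set (EuclideanSpace ℝ (Fin n)) :=
  { q | ∀ ε > (0 : ℝ), ∀ᶠ y in nhdsWithin x S, u y - u x - ⟪q, y - x⟫_ℝ ≤ ε * ‖y - x‖ }

/-- The Bellman operator `F(x,p,X) = sup_{α ∈ A} (-b(x,α)·p - tr(σσᵀ X))`. -/
def Fop {n m r : ℕ} (A : Set (Fin m → ℝ))
    (b : EuclideanSpace ℝ (Fin n) → (Fin m → ℝ) → EuclideanSpace ℝ (Fin n))
    (σ : EuclideanSpace ℝ (Fin n) → (Fin m → ℝ) → Matrix (Fin n) (Fin r) ℝ)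
    (x p : EuclideanSpace ℝ (Fin n)) (X : Matrix (Fin n) (Fin n) ℝ) : ℝ :=
  sSup ((fun α => -⟪b x α, p⟫_ℝ - Matrix.trace (σ x α * (σ x α)ᵀ * X)) '' A)

/-- The Hamiltonian `H(x,p,X) = sup_{α ∈ A} (-b(x,α)·p - tr(σσᵀ X) - l(x,α))`. -/
def Hop {n m r : ℕ} (A : Set (Fin m → ℝ))
    (b : EuclideanSpace ℝ (Fin n) → (Fin m → ℝ) → EuclideanSpace ℝ (Fin n))
    (σ : EuclideanSpace ℝ (Fin n) → (Fin m → ℝ) → Matrix (Fin n) (Fin r) ℝ)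
    (l : EuclideanSpace ℝ (Fin n) → (Fin m → ℝ) → ℝ)
    (x p : EuclideanSpace ℝ (Fin n)) (X : Matrix (Fin n) (Fin n) ℝ) : ℝ :=
  sSup ((fun α => -⟪b x α, p⟫_ℝ - Matrix.trace (σ x α * (σ x α)ᵀ * X) - l x α) '' A)

/-- The set of projections of `x` onto `∂Ω`. -/
def projSet {n : ℕ} (Ω : Set (EuclideanSpace ℝ (Fin n))) (x : EuclideanSpace ℝ (Fin n)) :
    Set (EuclideanSpace ℝ (Fin n)) :=
  { z | z ∈ frontier Ω ∧ dist x z = bdist Ω x }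

/-- The interior normal directions at a boundary point `z`. -/
def normalDirs {n : ℕ} (Ω : Set (EuclideanSpace ℝ (Fin n))) (z : EuclideanSpace ℝ (Fin n)) :
    Set (EuclideanSpace ℝ (Fin n)) :=
  { ν | ‖ν‖ = 1 ∧ ∃ x ∈ Ω, x = z + bdist Ω x • ν }


/-! Let `z` be a nearest boundary point of `x ∈ Ω`, so `d(x) = |x - z|`, and let `α₀` be the
control given at `z`. The drift term of `α₀` is at least `k d / (d + η)`. Since
`σ(z,α₀)ᵀ Dd(z) = 0`, the Hölder bound on `σ` and the Lipschitz bound on `Dd` (from the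
bound on `D²d` over a compact collar of `∂Ω`) give `|σ(x,α₀)ᵀ Dd(x)| ≤ B d^β + C L d`.
Hence the diffusion term is `O(d^{2β}) = o(d)` as `d → 0` because `2β > 1`, so the
`α₀`-term, and with it the (bounded) supremum, is positive for small `d`. -/

open Metric Set

section Matrix

variable {n r : ℕ}

lemma mnorm_nonneg (M : Matrix (Fin n) (Fin r) ℝ) : 0 ≤ mnorm M := Real.sqrt_nonneg _

lemma abs_le_mnorm (M : Matrix (Fin n) (Fin r) ℝ) (i : Fin n) (j : Fin r) :
    |M i j| ≤ mnorm M := by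
  rw [mnorm, ← Real.sqrt_sq_eq_abs]
  gcongr
  calc M i j ^ 2 ≤ ∑ j', M i j' ^ 2 :=
        Finset.single_le_sum (fun _ _ => sq_nonneg _) (Finset.mem_univ j)
    _ ≤ ∑ i', ∑ j', M i' j' ^ 2 :=
        Finset.single_le_sum (f := fun i' => ∑ j', M i' j' ^ 2)
          (fun _ _ => Finset.sum_nonneg fun _ _ => sq_nonneg _) (Finset.mem_univ i)

lemma sum_sq_sigmaT (M : Matrix (Fin n) (Fin r) ℝ) (v : EuclideanSpace ℝ (Fin n)) :
    ∑ i, sigmaT M v i ^ 2 = ‖WithLp.toLp 2 (sigmaT M v)‖ ^ 2 := by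
  simp [EuclideanSpace.norm_sq_eq]

lemma norm_sigmaT_le (M : Matrix (Fin n) (Fin r) ℝ) (v : EuclideanSpace ℝ (Fin n)) :
    ‖WithLp.toLp 2 (sigmaT M v)‖ ≤ mnorm M * ‖v‖ := by
  rw [EuclideanSpace.norm_eq, EuclideanSpace.norm_eq, mnorm, ← Real.sqrt_mul (by positivity)]
  gcongr
  calc ∑ j, ‖(WithLp.toLp 2 (sigmaT M v)) j‖ ^ 2 = ∑ j, (∑ i, M i j * v i) ^ 2 := by
        simp [sigmaT, Matrix.mulVec, dotProduct]
    _ ≤ ∑ j, (∑ i, M i j ^ 2) * ∑ i, v i ^ 2 := by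
        gcongr with j; exact Finset.sum_mul_sq_le_sq_mul_sq _ _ _
    _ = (∑ i, ∑ j, M i j ^ 2) * ∑ i, ‖v i‖ ^ 2 := by
        simp [Finset.sum_comm (f := fun i j => M i j ^ 2), Finset.sum_mul]

lemma sigmaT_eq_sub_add (M N : Matrix (Fin n) (Fin r) ℝ) (v w : EuclideanSpace ℝ (Fin n)) :
    sigmaT M v = sigmaT (M - N) v + sigmaT N (v - w) + sigmaT N w := by
  have hsub : (fun i => (v - w) i) = (fun i => v i) - fun i => w i := rfl
  simp only [sigmaT, Matrix.transpose_sub, Matrix.sub_mulVec, hsub, Matrix.mulVec_sub]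
  abel

lemma abs_mul_transpose_apply_le (M : Matrix (Fin n) (Fin r) ℝ) (i j : Fin n) :
    |(M * Mᵀ) i j| ≤ r * mnorm M ^ 2 :=
  calc |(M * Mᵀ) i j| ≤ ∑ k, |M i k| * |M j k| := by
        simpa only [Matrix.mul_apply, Matrix.transpose_apply, abs_mul]
          using Finset.abs_sum_le_sum_abs (fun k => M i k * M j k) Finset.univ
    _ ≤ ∑ _k : Fin r, mnorm M * mnorm M := Finset.sum_le_sum fun k _ =>
        mul_le_mul (abs_le_mnorm _ _ _) (abs_le_mnorm _ _ _) (abs_nonneg _) (mnorm_nonneg _)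
    _ = r * mnorm M ^ 2 := by simp [sq]

lemma abs_trace_mul_transpose_mul_le (M : Matrix (Fin n) (Fin r) ℝ)
    (X : Matrix (Fin n) (Fin n) ℝ) :
    |Matrix.trace (M * Mᵀ * X)| ≤ r * mnorm M ^ 2 * ∑ i, ∑ j, |X j i| :=
  calc |Matrix.trace (M * Mᵀ * X)| ≤ ∑ i, ∑ j, |(M * Mᵀ) i j| * |X j i| := by
        simp only [Matrix.trace, Matrix.diag_apply, Matrix.mul_apply (M := M * Mᵀ), ← abs_mul]
        exact (Finset.abs_sum_le_sum_abs _ _).trans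
          (by gcongr; exact Finset.abs_sum_le_sum_abs _ _)
    _ ≤ ∑ i, ∑ j, r * mnorm M ^ 2 * |X j i| := by
        gcongr; exact abs_mul_transpose_apply_le _ _ _
    _ = r * mnorm M ^ 2 * ∑ i, ∑ j, |X j i| := by simp only [Finset.mul_sum]

lemma norm_sigmaT_le_of_sigmaT_eq_zero {M N : Matrix (Fin n) (Fin r) ℝ}
    {v w : EuclideanSpace ℝ (Fin n)} (h : sigmaT N w = 0) :
    ‖WithLp.toLp 2 (sigmaT M v)‖ ≤ mnorm (M - N) * ‖v‖ + mnorm N * ‖v - w‖ := by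
  rw [sigmaT_eq_sub_add M N v w, h, add_zero, WithLp.toLp_add]
  exact (norm_add_le _ _).trans (add_le_add (norm_sigmaT_le _ _) (norm_sigmaT_le _ _))

lemma sum_sq_sigmaT_le_of_sigmaT_eq_zero {M N : Matrix (Fin n) (Fin r) ℝ}
    {v w : EuclideanSpace ℝ (Fin n)} (h : sigmaT N w = 0) {a C c : ℝ} (hC : 0 ≤ C)
    (hMN : mnorm (M - N) ≤ a) (hN : mnorm N ≤ C) (hv : ‖v‖ = 1) (hvw : ‖v - w‖ ≤ c) :
    ∑ i, sigmaT M v i ^ 2 ≤ (a + C * c) ^ 2 := by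
  rw [sum_sq_sigmaT]
  refine pow_le_pow_left₀ (norm_nonneg _) ((norm_sigmaT_le_of_sigmaT_eq_zero h).trans ?_) 2
  rw [hv, mul_one]
  gcongr

lemma continuous_toContinuousLinearMap_toEuclideanLin :
    Continuous fun M : Matrix (Fin n) (Fin n) ℝ =>
      LinearMap.toContinuousLinearMap (Matrix.toEuclideanLin M) := by
  have hlin : IsLinearMap ℝ fun M : Matrix (Fin n) (Fin n) ℝ =>
      LinearMap.toContinuousLinearMap (Matrix.toEuclideanLin M) := by
    constructor <;> intros <;> simp [map_add, map_smul]
  exact (IsLinearMap.mk' _ hlin).continuous_of_finiteDimensional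

end Matrix

section SignedDistance

variable {n : ℕ} {Ω : Set (EuclideanSpace ℝ (Fin n))}

lemma sdist_univ (x : EuclideanSpace ℝ (Fin n)) : sdist univ x = 0 := by
  simp [sdist, infDist_zero_of_mem (mem_univ x)]

/-- `univ` is bounded only in dimension `0`, where there is no unit vector `Dd 0`. -/
lemma ne_univ_of_isBounded (hΩ : Bornology.IsBounded Ω) {δ₀ : ℝ} (hδ₀ : 0 < δ₀)
    {Dd : EuclideanSpace ℝ (Fin n) → EuclideanSpace ℝ (Fin n)}
    (hDd : ∀ x, |sdist Ω x| < δ₀ → ‖Dd x‖ = 1) : Ω ≠ univ := by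
  rintro rfl
  have : Nontrivial (EuclideanSpace ℝ (Fin n)) :=
    ⟨Dd 0, 0, norm_ne_zero_iff.1 (by simp [hDd 0 (by simpa [sdist_univ] using hδ₀)])⟩
  exact NormedSpace.unbounded_univ ℝ _ hΩ

lemma sdist_of_mem {x : EuclideanSpace ℝ (Fin n)} (hx : x ∈ Ω) :
    sdist Ω x = infDist x Ωᶜ := by
  rw [sdist, infDist_zero_of_mem (subset_closure hx), sub_zero]

lemma abs_sdist_le_dist {x z : EuclideanSpace ℝ (Fin n)} (hz : z ∈ frontier Ω) :
    |sdist Ω x| ≤ dist x z := by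
  have hzc : z ∈ closure Ωᶜ := (frontier_eq_closure_inter_closure (s := Ω) ▸ hz).2
  have h₁ : infDist x Ωᶜ ≤ dist x z :=
    infDist_closure (s := Ωᶜ) ▸ infDist_le_dist_of_mem hzc
  have h₂ : infDist x (closure Ω) ≤ dist x z :=
    infDist_le_dist_of_mem (frontier_subset_closure hz)
  rw [sdist, abs_sub_le_iff]
  constructor <;>
    linarith [infDist_nonneg (x := x) (s := closure Ω), infDist_nonneg (x := x) (s := Ωᶜ)]

lemma cthickening_frontier_subset {ε δ : ℝ} (hε : 0 ≤ ε) (hεδ : ε < δ) :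
    cthickening ε (frontier Ω) ⊆ {x | |sdist Ω x| < δ} := by
  rw [isClosed_frontier.cthickening_eq_biUnion_closedBall hε]
  simp only [iUnion_subset_iff]
  exact fun z hz x hx => (abs_sdist_le_dist hz).trans_lt ((mem_closedBall.1 hx).trans_lt hεδ)

lemma exists_mem_frontier_sdist_eq_dist (hΩ : Ω ≠ univ) {x : EuclideanSpace ℝ (Fin n)}
    (hx : x ∈ Ω) : ∃ z ∈ frontier Ω, sdist Ω x = dist x z :=
  sdist_of_mem hx ▸ exists_mem_frontier_infDist_compl_eq_dist hx hΩ

end SignedDistance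

lemma exists_norm_sub_le_mul_dist_of_cthickening {E F : Type*} [NormedAddCommGroup E]
    [NormedSpace ℝ E] [ProperSpace E] [NormedAddCommGroup F] [NormedSpace ℝ F]
    {S : Set E} (hS : IsCompact S) {ε : ℝ} (hε : 0 ≤ ε)
    {g : E → F} {g' : E → E →L[ℝ] F}
    (hg : ∀ y ∈ cthickening ε S, HasFDerivAt g (g' y) y)
    (hg' : ContinuousOn g' (cthickening ε S)) :
    ∃ L, ∀ z ∈ S, ∀ x ∈ closedBall z ε, ‖g x - g z‖ ≤ L * dist x z := by
  obtain ⟨L, hL⟩ := (hS.cthickening (r := ε)).exists_bound_of_continuousOn hg'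
  refine ⟨L, fun z hz x hx => ?_⟩
  have hball : closedBall z ε ⊆ cthickening ε S := closedBall_subset_cthickening hz ε
  rw [dist_eq_norm]
  exact (convex_closedBall z ε).norm_image_sub_le_of_norm_hasFDerivWithin_le
    (fun y hy => (hg y (hball hy)).hasFDerivWithinAt) (fun y hy => hL y (hball hy))
    (mem_closedBall_self hε) hx

lemma exists_norm_sub_le_mul_dist_near_frontier {n : ℕ} {Ω : Set (EuclideanSpace ℝ (Fin n))}
    (hΩ : Bornology.IsBounded Ω) {δ₀ : ℝ} (hδ₀ : 0 < δ₀)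
    {Dd : EuclideanSpace ℝ (Fin n) → EuclideanSpace ℝ (Fin n)}
    {D2d : EuclideanSpace ℝ (Fin n) → Matrix (Fin n) (Fin n) ℝ}
    (hD2d : ∀ x, |sdist Ω x| < δ₀ →
      HasFDerivAt Dd (LinearMap.toContinuousLinearMap (Matrix.toEuclideanLin (D2d x))) x)
    (hD2dCont : ContinuousOn D2d {x | |sdist Ω x| < δ₀}) :
    ∃ L, ∀ z ∈ frontier Ω, ∀ x ∈ closedBall z (δ₀ / 2),
      ‖Dd x - Dd z‖ ≤ L * dist x z := by
  have hnear := cthickening_frontier_subset (Ω := Ω) (half_pos hδ₀).le (half_lt_self hδ₀)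
  exact exists_norm_sub_le_mul_dist_of_cthickening
    (hΩ.isCompact_closure.of_isClosed_subset isClosed_frontier frontier_subset_closure)
    (half_pos hδ₀).le (fun y hy => hD2d y (hnear hy))
    (continuous_toContinuousLinearMap_toEuclideanLin.comp_continuousOn (hD2dCont.mono hnear))

lemma exists_sq_rpow_add_lt {β : ℝ} (hβ : 1 / 2 < β) (B M : ℝ) {c : ℝ} (hc : 0 < c) :
    ∃ ε > 0, ∀ t, 0 < t → t < ε → (B * t ^ β + M * t) ^ 2 < c * t := by
  have hβ' : 0 < 2 * β - 1 := by linarith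
  have hcont : ContinuousAt (fun t : ℝ => 2 * B ^ 2 * t ^ (2 * β - 1) + 2 * M ^ 2 * t) 0 :=
    ((Real.continuousAt_rpow_const 0 _ (Or.inr hβ'.le)).const_mul _).add
      (continuousAt_id.const_mul _)
  have hlim := hcont.tendsto
  rw [Real.zero_rpow hβ'.ne', mul_zero, mul_zero, add_zero] at hlim
  obtain ⟨ε, hε, hsmall⟩ := Metric.eventually_nhds_iff.1 (hlim.eventually (gt_mem_nhds hc))
  refine ⟨ε, hε, fun t ht htε => ?_⟩
  have hpow : (t ^ β) ^ 2 = t ^ (2 * β - 1) * t := by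
    rw [← Real.rpow_natCast, ← Real.rpow_mul ht.le, ← Real.rpow_add_one ht.ne']
    norm_num [mul_comm]
  calc (B * t ^ β + M * t) ^ 2 ≤ 2 * (B * t ^ β) ^ 2 + 2 * (M * t) ^ 2 := by
        nlinarith [sq_nonneg (B * t ^ β - M * t)]
    _ = t * (2 * B ^ 2 * t ^ (2 * β - 1) + 2 * M ^ 2 * t) := by rw [mul_pow, hpow]; ring
    _ < t * c :=
        mul_lt_mul_of_pos_left (hsmall (by rwa [Real.dist_eq, sub_zero, abs_of_pos ht])) ht
    _ = c * t := mul_comm _ _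

lemma div_add_div_sub_div_sq_pos {P Q S k d η : ℝ} (hk : 0 ≤ k) (hd : 0 < d) (hη : 0 < η)
    (hPQ : k * d ≤ P + Q) (hS : S < k * d * η) :
    0 < P / (d + η) + Q / (d + η) - S / (d + η) ^ 2 := by
  have ht : 0 < d + η := by linarith
  have hrw : P / (d + η) + Q / (d + η) - S / (d + η) ^ 2
      = ((P + Q) * (d + η) - S) / (d + η) ^ 2 := by
    field_simp
  rw [hrw]
  apply div_pos _ (by positivity)
  nlinarith [mul_le_mul_of_nonneg_right hPQ ht.le, mul_nonneg (mul_nonneg hk hd.le) hd.le]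

lemma bddAbove_image_div_add_div_sub_div {ι : Type*} {n r : ℕ} (A : Set ι)
    (b : ι → EuclideanSpace ℝ (Fin n)) (σ : ι → Matrix (Fin n) (Fin r) ℝ)
    (p : EuclideanSpace ℝ (Fin n)) (X : Matrix (Fin n) (Fin n) ℝ) (S : ι → ℝ)
    (hS : ∀ α, 0 ≤ S α) {t : ℝ} (ht : 0 < t) {Cb Cσ : ℝ}
    (hb : ∀ α ∈ A, ‖b α‖ ≤ Cb) (hσ : ∀ α ∈ A, mnorm (σ α) ≤ Cσ) :
    BddAbove ((fun α => ⟪b α, p⟫_ℝ / t + Matrix.trace (σ α * (σ α)ᵀ * X) / t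
      - S α / t ^ 2) '' A) := by
  refine ⟨(Cb * ‖p‖ + r * Cσ ^ 2 * ∑ i, ∑ j, |X j i|) / t, ?_⟩
  rintro _ ⟨α, hα, rfl⟩
  have hinner : ⟪b α, p⟫_ℝ ≤ Cb * ‖p‖ :=
    (real_inner_le_norm _ _).trans (mul_le_mul_of_nonneg_right (hb α hα) (norm_nonneg _))
  have htrace : Matrix.trace (σ α * (σ α)ᵀ * X) ≤ r * Cσ ^ 2 * ∑ i, ∑ j, |X j i| := by
    refine (le_abs_self _).trans ((abs_trace_mul_transpose_mul_le _ _).trans ?_)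
    have := hσ α hα
    have := mnorm_nonneg (σ α)
    gcongr
  have hS' : 0 ≤ S α / t ^ 2 := div_nonneg (hS α) (by positivity)
  calc _ ≤ (⟪b α, p⟫_ℝ + Matrix.trace (σ α * (σ α)ᵀ * X)) / t := by
        rw [add_div]; linarith
    _ ≤ _ := by gcongr

theorem statement_4_general
    {n m r : ℕ} (Ω : Set (EuclideanSpace ℝ (Fin n)))
    (hΩo : IsOpen Ω) (hΩbdd : Bornology.IsBounded Ω)
    (A : Set (Fin m → ℝ))
    (b : EuclideanSpace ℝ (Fin n) → (Fin m → ℝ) → EuclideanSpace ℝ (Fin n))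
    (σ : EuclideanSpace ℝ (Fin n) → (Fin m → ℝ) → Matrix (Fin n) (Fin r) ℝ)
    (hbBdd : ∃ C, ∀ x ∈ closure Ω, ∀ α ∈ A, ‖b x α‖ ≤ C)
    (hσBdd : ∃ C, ∀ x ∈ closure Ω, ∀ α ∈ A, mnorm (σ x α) ≤ C)
    (δ₀ : ℝ) (hδ₀ : 0 < δ₀)
    (Dd : EuclideanSpace ℝ (Fin n) → EuclideanSpace ℝ (Fin n))
    (D2d : EuclideanSpace ℝ (Fin n) → Matrix (Fin n) (Fin n) ℝ)
    (hDdnorm : ∀ x, |sdist Ω x| < δ₀ → ‖Dd x‖ = 1)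
    (hD2d : ∀ x, |sdist Ω x| < δ₀ →
      HasFDerivAt Dd (LinearMap.toContinuousLinearMap (Matrix.toEuclideanLin (D2d x))) x)
    (hD2dCont : ContinuousOn D2d {x | |sdist Ω x| < δ₀})
    (β B : ℝ) (hβlow : 1 / 2 < β)
    (hreg2 : ∀ x ∈ closure Ω, ∀ y ∈ closure Ω, ∀ α ∈ A,
      mnorm (σ x α - σ y α) ≤ B * ‖x - y‖ ^ β)
    (hirr1 : ∃ δ₁ > (0 : ℝ), ∃ k > (0 : ℝ), ∀ z ∈ frontier Ω, ∃ α₀ ∈ A,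
      sigmaT (σ z α₀) (Dd z) = 0 ∧
        ∀ x ∈ Ω ∩ Metric.ball z δ₁,
          k * sdist Ω x ≤
            ⟪b x α₀, Dd x⟫_ℝ + Matrix.trace (σ x α₀ * (σ x α₀)ᵀ * D2d x)) :
    ∀ η > (0 : ℝ), ∃ δ > (0 : ℝ), ∀ x ∈ Ω, sdist Ω x < δ →
      0 < sSup ((fun α =>
        ⟪b x α, Dd x⟫_ℝ / (sdist Ω x + η)
          + Matrix.trace (σ x α * (σ x α)ᵀ * D2d x) / (sdist Ω x + η)
          - (∑ i, sigmaT (σ x α) (Dd x) i ^ 2) / (sdist Ω x + η) ^ 2) '' A) := by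
  intro η hη
  have hΩne : Ω ≠ univ := ne_univ_of_isBounded hΩbdd hδ₀ hDdnorm
  obtain ⟨L, hL⟩ := exists_norm_sub_le_mul_dist_near_frontier hΩbdd hδ₀ hD2d hD2dCont
  obtain ⟨δ₁, hδ₁, k, hk, hirr⟩ := hirr1
  obtain ⟨Cb, hCb⟩ := hbBdd
  obtain ⟨Cσ, hCσ⟩ := hσBdd
  obtain ⟨ε, hε, hsmall⟩ := exists_sq_rpow_add_lt hβlow B (Cσ * L) (mul_pos hk hη)
  refine ⟨min (min (δ₀ / 2) δ₁) ε, by positivity, fun x hx hxδ => ?_⟩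
  simp only [lt_min_iff] at hxδ
  obtain ⟨z, hz, hxz⟩ := exists_mem_frontier_sdist_eq_dist hΩne hx
  have hd : 0 < sdist Ω x := hxz ▸ dist_pos.2 fun h => (hΩo.frontier_eq ▸ hz).2 (h ▸ hx)
  obtain ⟨α₀, hα₀, hσz, hdrift⟩ := hirr z hz
  have hxcl := subset_closure hx
  have hzcl := frontier_subset_closure hz
  have hnoise : ∑ i, sigmaT (σ x α₀) (Dd x) i ^ 2
      ≤ (B * sdist Ω x ^ β + Cσ * (L * sdist Ω x)) ^ 2 :=
    sum_sq_sigmaT_le_of_sigmaT_eq_zero hσz ((mnorm_nonneg _).trans (hCσ z hzcl α₀ hα₀))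
      (by rw [hxz, dist_eq_norm]; exact hreg2 x hxcl z hzcl α₀ hα₀) (hCσ z hzcl α₀ hα₀)
      (hDdnorm x (by rw [abs_of_pos hd]; linarith))
      (hxz ▸ hL z hz x (mem_closedBall.2 (hxz ▸ hxδ.1.1.le)))
  refine lt_csSup_of_lt (bddAbove_image_div_add_div_sub_div A (b x) (σ x) (Dd x) (D2d x) _
    (fun _ => by positivity) (by linarith) (hCb x hxcl) (hCσ x hxcl))
    (mem_image_of_mem _ hα₀)
    (div_add_div_sub_div_sq_pos hk.le hd hη (hdrift x ⟨hx, mem_ball.2 (hxz ▸ hxδ.1.2)⟩) ?_)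
  calc _ ≤ (B * sdist Ω x ^ β + Cσ * (L * sdist Ω x)) ^ 2 := hnoise
    _ = (B * sdist Ω x ^ β + Cσ * L * sdist Ω x) ^ 2 := by ring
    _ < k * η * sdist Ω x := hsmall _ hd hxδ.2
    _ = k * sdist Ω x * η := by ring

theorem statement_4
    {n m r : ℕ} (Ω : Set (EuclideanSpace ℝ (Fin n)))
    (hΩo : IsOpen Ω) (hΩconn : IsConnected Ω) (hΩbdd : Bornology.IsBounded Ω)
    (A : Set (Fin m → ℝ)) (hA : IsClosed A) (hAne : A.Nonempty)
    (b : EuclideanSpace ℝ (Fin n) → (Fin m → ℝ) → EuclideanSpace ℝ (Fin n))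
    (σ : EuclideanSpace ℝ (Fin n) → (Fin m → ℝ) → Matrix (Fin n) (Fin r) ℝ)
    (hbBdd : ∃ C, ∀ x ∈ closure Ω, ∀ α ∈ A, ‖b x α‖ ≤ C)
    (hσBdd : ∃ C, ∀ x ∈ closure Ω, ∀ α ∈ A, mnorm (σ x α) ≤ C)
    (hbCont : ContinuousOn (fun q : EuclideanSpace ℝ (Fin n) × (Fin m → ℝ) => b q.1 q.2)
      (closure Ω ×ˢ A))
    (hσCont : ContinuousOn (fun q : EuclideanSpace ℝ (Fin n) × (Fin m → ℝ) => σ q.1 q.2)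
      (closure Ω ×ˢ A))
    (δ₀ : ℝ) (hδ₀ : 0 < δ₀)
    (Dd : EuclideanSpace ℝ (Fin n) → EuclideanSpace ℝ (Fin n))
    (D2d : EuclideanSpace ℝ (Fin n) → Matrix (Fin n) (Fin n) ℝ)
    (hDd : ∀ x, |sdist Ω x| < δ₀ → HasGradientAt (sdist Ω) (Dd x) x)
    (hDdnorm : ∀ x, |sdist Ω x| < δ₀ → ‖Dd x‖ = 1)
    (hD2d : ∀ x, |sdist Ω x| < δ₀ →
      HasFDerivAt Dd (LinearMap.toContinuousLinearMap (Matrix.toEuclideanLin (D2d x))) x)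
    (hD2dCont : ContinuousOn D2d {x | |sdist Ω x| < δ₀})
    (β B : ℝ) (hβlow : 1 / 2 < β) (hβhigh : β ≤ 1) (hB : 0 < B)
    (hreg2 : ∀ x ∈ closure Ω, ∀ y ∈ closure Ω, ∀ α ∈ A,
      mnorm (σ x α - σ y α) ≤ B * ‖x - y‖ ^ β)
    (hirr1 : ∃ δ₁ > (0 : ℝ), ∃ k > (0 : ℝ), ∀ z ∈ frontier Ω, ∃ α₀ ∈ A,
      sigmaT (σ z α₀) (Dd z) = 0 ∧
        ∀ x ∈ Ω ∩ Metric.ball z δ₁,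
          k * sdist Ω x ≤
            ⟪b x α₀, Dd x⟫_ℝ + Matrix.trace (σ x α₀ * (σ x α₀)ᵀ * D2d x)) :
    ∀ η > (0 : ℝ), ∃ δ > (0 : ℝ), ∀ x ∈ Ω, sdist Ω x < δ →
      0 < sSup ((fun α =>
        ⟪b x α, Dd x⟫_ℝ / (sdist Ω x + η)
          + Matrix.trace (σ x α * (σ x α)ᵀ * D2d x) / (sdist Ω x + η)
          - (∑ i, sigmaT (σ x α) (Dd x) i ^ 2) / (sdist Ω x + η) ^ 2) '' A) :=
  statement_4_general Ω hΩo hΩbdd A b σ hbBdd hσBdd δ₀ hδ₀ Dd D2d hDdnorm hD2d hD2dCont β B hβlow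
    hreg2 hirr1
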